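/- Let ξ₁,…,ξ_N and λ₁,…,λ_N be complex numbers such that all the quantities sinh(ξ_k − λ_j), sinh(ξ_k + λ_j + η), sinh(ξ_a − ξ_k), sinh(ξ_k + ξ_a + η) (a ≠ k), sinh(λ_j − λ_a), sinh(λ_j + λ_a + η) (a ≠ j) are nonzero. Define the N×N Cauchy-type matrix C with entries C_{kj} = 1/(sinh(ξ_k − λ_j) sinh(ξ_k + λ_j + η)). Then C is invertible and its inverse has entries (C⁻¹)_{jk} = [1/(sinh(ξ_k − λ_j) sinh(ξ_k + λ_j + η))] · ∏_{a=1}^N [sinh(ξ_a − λ_j) sinh(λ_j + ξ_a + η) sinh(ξ_k − λ_a) sinh(λ_a + ξ_k + η)] / ( ∏_{a ≠ k} [sinh(ξ_a − ξ_k) sinh(ξ_k + ξ_a + η)] · ∏_{a ≠ j} [sinh(λ_j − λ_a) sinh(λ_j + λ_a + η)] ). -/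

import Mathlib

open Complex Finset Polynomial

/-!
Put `X k = cosh (2 ξ k + η) / 2` and `Y j = cosh (2 λ j + η) / 2`. The product formula
`cosh a - cosh b = 2 sinh ((a + b) / 2) sinh ((a - b) / 2)` turns every factor
`sinh (u - v) sinh (u + v + η)` into a difference `X - Y`, so the matrix becomes the rational
Cauchy matrix `1 / (X k - Y j)`. Up to diagonal factors, a Cauchy matrix is the matrix of values of
the Lagrange basis on the nodes `Y` at the points `X`; its inverse is the matrix of values of the
Lagrange basis on `X` at `Y`, because interpolating a polynomial of degree `< N` at `N` nodes
reproduces it.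
-/

namespace Lagrange

variable {F ι : Type*} [Field F] [DecidableEq ι]

theorem eval_basis_eq_prod (s : Finset ι) (v : ι → F) (i : ι) (z : F) :
    (Lagrange.basis s v i).eval z = ∏ a ∈ s.erase i, (v a - z) / (v a - v i) := by
  simp only [Lagrange.basis, basisDivisor, eval_prod, eval_mul, eval_C, eval_sub, eval_X]
  refine prod_congr rfl fun a _ => ?_
  rw [inv_mul_eq_div, ← neg_div_neg_eq, neg_sub, neg_sub]

variable [Fintype ι]

noncomputable def evalMatrix (v z : ι → F) : Matrix ι ι F :=
  Matrix.of fun k j => (Lagrange.basis univ v j).eval (z k)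

theorem evalMatrix_mul_evalMatrix {x y : ι → F} (hx : Function.Injective x)
    (hy : Function.Injective y) : evalMatrix y x * evalMatrix x y = 1 := by
  ext k i
  have hdeg : (Lagrange.basis univ x i).degree < #(univ : Finset ι) := by
    rw [degree_basis hx.injOn (mem_univ i), Nat.cast_lt]
    exact Nat.sub_lt (card_pos.mpr ⟨i, mem_univ i⟩) one_pos
  have hinterp := congrArg (eval (x k)) (eq_interpolate hy.injOn hdeg)
  rw [interpolate_apply, eval_finsetSum] at hinterp
  simp only [Matrix.mul_apply, evalMatrix, Matrix.of_apply, Matrix.one_apply]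
  simp only [eval_mul, eval_C, mul_comm (eval (y _) _)] at hinterp
  rw [← hinterp]
  split_ifs with hki
  · rw [hki, eval_basis_self hx.injOn (mem_univ i)]
  · exact eval_basis_of_ne (Ne.symm hki) (mem_univ k)

end Lagrange

section Cauchy

open Lagrange

variable {F ι : Type*} [Field F] [Fintype ι] [DecidableEq ι]

def cauchyMatrix (x y : ι → F) : Matrix ι ι F :=
  Matrix.of fun k j => (x k - y j)⁻¹

def cauchyInv (x y : ι → F) : Matrix ι ι F :=
  Matrix.of fun j i => (∏ a, (x a - y j) * (x i - y a)) /
    ((x i - y j) * (∏ a ∈ univ.erase i, (x a - x i)) * ∏ a ∈ univ.erase j, (y j - y a))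

variable {x y : ι → F}

theorem evalMatrix_eq_diagonal_mul_cauchyMatrix_mul_diagonal (hxy : ∀ k j, x k ≠ y j) :
    evalMatrix y x = Matrix.diagonal (fun k => (nodal univ y).eval (x k)) * cauchyMatrix x y *
      Matrix.diagonal (nodalWeight univ y) := by
  ext k j
  simp only [evalMatrix, cauchyMatrix, Matrix.of_apply, Matrix.mul_diagonal, Matrix.diagonal_mul,
    eval_basis_not_at_node (mem_univ j) (hxy k j)]
  ring

theorem cauchyInv_eq_diagonal_mul_evalMatrix_mul_diagonal (hxy : ∀ k j, x k ≠ y j) :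
    cauchyInv x y = Matrix.diagonal (nodalWeight univ y) * evalMatrix x y *
      Matrix.diagonal (fun k => (nodal univ y).eval (x k)) := by
  ext j i
  have hij : x i - y j ≠ 0 := sub_ne_zero.mpr (hxy i j)
  simp only [cauchyInv, evalMatrix, Matrix.of_apply, Matrix.mul_diagonal, Matrix.diagonal_mul,
    eval_basis_eq_prod, eval_nodal, nodalWeight, prod_div_distrib, prod_inv_distrib,
    prod_mul_distrib, ← mul_prod_erase univ (fun a => x a - y j) (mem_univ i)]
  field_simp

theorem cauchyMatrix_mul_cauchyInv (hx : Function.Injective x) (hy : Function.Injective y)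
    (hxy : ∀ k j, x k ≠ y j) : cauchyMatrix x y * cauchyInv x y = 1 := by
  have hAB := evalMatrix_mul_evalMatrix hx hy
  rw [evalMatrix_eq_diagonal_mul_cauchyMatrix_mul_diagonal hxy, Matrix.mul_assoc,
    Matrix.mul_assoc] at hAB
  rw [cauchyInv_eq_diagonal_mul_evalMatrix_mul_diagonal hxy, ← Matrix.mul_assoc,
    ← Matrix.mul_assoc, Matrix.mul_assoc (cauchyMatrix x y)]
  exact mul_eq_one_comm.mp hAB

end Cauchy

theorem Complex.cosh_div_two_sub_cosh_div_two (u v η : ℂ) :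
    cosh (2 * u + η) / 2 - cosh (2 * v + η) / 2 = sinh (u - v) * sinh (u + v + η) := by
  have hu : 2 * u + η = (u + v + η) + (u - v) := by ring
  have hv : 2 * v + η = (u + v + η) - (u - v) := by ring
  rw [hu, hv, cosh_add (u + v + η), cosh_sub (u + v + η)]
  ring

/-- Explicit inverse of the hyperbolic Cauchy matrix
`C_{kj} = 1/(sinh(ξ_k − λ_j) sinh(ξ_k + λ_j + η))`. -/
theorem stmt5 (N : ℕ) (η : ℂ) (ξ lam : Fin N → ℂ)
    (h1 : ∀ k j, Complex.sinh (ξ k - lam j) ≠ 0)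
    (h2 : ∀ k j, Complex.sinh (ξ k + lam j + η) ≠ 0)
    (h3 : ∀ a k, a ≠ k → Complex.sinh (ξ a - ξ k) ≠ 0)
    (h4 : ∀ a k, a ≠ k → Complex.sinh (ξ k + ξ a + η) ≠ 0)
    (h5 : ∀ a j, a ≠ j → Complex.sinh (lam j - lam a) ≠ 0)
    (h6 : ∀ a j, a ≠ j → Complex.sinh (lam j + lam a + η) ≠ 0) :
    let C : Matrix (Fin N) (Fin N) ℂ :=
      Matrix.of fun k j => 1 / (Complex.sinh (ξ k - lam j) * Complex.sinh (ξ k + lam j + η))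
    let D : Matrix (Fin N) (Fin N) ℂ :=
      Matrix.of fun j k =>
        (1 / (Complex.sinh (ξ k - lam j) * Complex.sinh (ξ k + lam j + η))) *
        (∏ a, (Complex.sinh (ξ a - lam j) * Complex.sinh (lam j + ξ a + η) *
                Complex.sinh (ξ k - lam a) * Complex.sinh (lam a + ξ k + η))) /
        ((∏ a ∈ Finset.univ.erase k, (Complex.sinh (ξ a - ξ k) * Complex.sinh (ξ k + ξ a + η))) *
         (∏ a ∈ Finset.univ.erase j, (Complex.sinh (lam j - lam a) * Complex.sinh (lam j + lam a + η))))
    C * D = 1 ∧ D * C = 1 := by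
  intro C D
  set X : Fin N → ℂ := fun k => cosh (2 * ξ k + η) / 2
  set Y : Fin N → ℂ := fun j => cosh (2 * lam j + η) / 2
  have hXY k j : X k - Y j = sinh (ξ k - lam j) * sinh (ξ k + lam j + η) :=
    cosh_div_two_sub_cosh_div_two _ _ _
  have hXX a k : X a - X k = sinh (ξ a - ξ k) * sinh (ξ k + ξ a + η) := by
    rw [add_comm (ξ k)]; exact cosh_div_two_sub_cosh_div_two _ _ _
  have hYY j a : Y j - Y a = sinh (lam j - lam a) * sinh (lam j + lam a + η) :=
    cosh_div_two_sub_cosh_div_two _ _ _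
  have hX : Function.Injective X := fun a k h => by_contra fun hak =>
    mul_ne_zero (h3 a k hak) (h4 a k hak) (by rw [← hXX, h, sub_self])
  have hY : Function.Injective Y := fun j a h => by_contra fun hja =>
    mul_ne_zero (h5 a j (Ne.symm hja)) (h6 a j (Ne.symm hja)) (by rw [← hYY, h, sub_self])
  have hXY_ne k j : X k ≠ Y j :=
    sub_ne_zero.mp (hXY k j ▸ mul_ne_zero (h1 k j) (h2 k j))
  have hC : C = cauchyMatrix X Y := by
    ext k j
    simp only [C, cauchyMatrix, Matrix.of_apply, hXY, one_div]
  have hD : D = cauchyInv X Y := by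
    ext j k
    simp only [D, cauchyInv, Matrix.of_apply, hXY, hXX, hYY, add_comm (lam _) (ξ _)]
    field_simp
  have hCD := cauchyMatrix_mul_cauchyInv hX hY hXY_ne
  rw [hC, hD]
  exact ⟨hCD, mul_eq_one_comm.mp hCD⟩
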